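/- arXiv:1807.07650 — 2 statements merged into one kernel-verified Lean document; each statement's English description precedes it below -/
import Mathlib

section
/- The sum of a monotone set function with maximum element-wise curvature bound C_f and a nonnegative multiple of a monotone submodular set function is monotone and has maximum element-wise curvature at most max(C_f, 1). -/
open Finset

/-- The sum of a monotone set function with curvature bound `C_f` and a nonnegative multiple of a
monotone submodular set function is monotone with curvature at most `max C_f 1`. -/
theorem sum_curvature_bound {X : Type*} [Fintype X] [DecidableEq X]
    (f g : Finset X → ℝ) (Cf γ : ℝ) (hγ : 0 ≤ γ)
    (hf_mono : ∀ S T : Finset X, S ⊆ T → f S ≤ f T)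
    (hf_curv : ∀ S T : Finset X, ∀ j : X, S ⊆ T → j ∉ T →
      f (insert j T) - f T ≤ Cf * (f (insert j S) - f S))
    (hg_mono : ∀ S T : Finset X, S ⊆ T → g S ≤ g T)
    (hg_sub : ∀ S T : Finset X, ∀ j : X, S ⊆ T → j ∉ T →
      g (insert j T) - g T ≤ g (insert j S) - g S) :
    (∀ S T : Finset X, S ⊆ T → f S + γ * g S ≤ f T + γ * g T) ∧
    (∀ S T : Finset X, ∀ j : X, S ⊆ T → j ∉ T →
      (f (insert j T) + γ * g (insert j T)) - (f T + γ * g T)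
        ≤ max Cf 1 * ((f (insert j S) + γ * g (insert j S)) - (f S + γ * g S))) := by
  constructor
  · intro S T hST
    have h1 := hf_mono S T hST
    have h2 := hg_mono S T hST
    nlinarith
  · intro S T j hST hjT
    have hfc := hf_curv S T j hST hjT
    have hgc := hg_sub S T j hST hjT
    have hfS : 0 ≤ f (insert j S) - f S := by
      have := hf_mono S (insert j S) (subset_insert j S); linarith
    have hgS : 0 ≤ g (insert j S) - g S := by
      have := hg_mono S (insert j S) (subset_insert j S); linarith
    have hCf : Cf ≤ max Cf 1 := le_max_left _ _
    have h1 : (1:ℝ) ≤ max Cf 1 := le_max_right _ _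
    have hA : f (insert j T) - f T ≤ max Cf 1 * (f (insert j S) - f S) := by
      calc f (insert j T) - f T ≤ Cf * (f (insert j S) - f S) := hfc
        _ ≤ max Cf 1 * (f (insert j S) - f S) := by nlinarith
    have hB : γ * (g (insert j T) - g T) ≤ max Cf 1 * (γ * (g (insert j S) - g S)) := by
      have : γ * (g (insert j T) - g T) ≤ γ * (g (insert j S) - g S) :=
        mul_le_mul_of_nonneg_left hgc hγ
      nlinarith [mul_nonneg hγ hgS]
    nlinarith
end

section
/- Curvature ratio bound: under the assumptions of the previous statement, for two symmetric positive definite matrices F, G with spectra contained in [λ_m, 2λ_M] and any nonzero h ∈ ℝⁿ with ‖h‖² ≤ σ²λ_M, the ratio [(hᵀG⁻²h)/(σ² + hᵀG⁻¹h)] / [(hᵀF⁻²h)/(σ² + hᵀF⁻¹h)] is at most (2λ_M/λ_m)³. -/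
open Matrix

variable {n : ℕ}

lemma vecMul_eq_star (U : Matrix (Fin n) (Fin n) ℝ) (h : Fin n → ℝ) :
    h ᵥ* U = star U *ᵥ h := by
  rw [star_eq_conjTranspose, conjTranspose_eq_transpose_of_trivial,
    ← vecMul_transpose, transpose_transpose]

lemma quad_conj_diag (U : Matrix (Fin n) (Fin n) ℝ) (d : Fin n → ℝ) (h : Fin n → ℝ) :
    h ⬝ᵥ ((U * diagonal d * star U) *ᵥ h)
      = ∑ i, d i * ((star U *ᵥ h) i)^2 := by
  set c := star U *ᵥ h with hc
  have h1 : (U * diagonal d * star U) *ᵥ h = U *ᵥ (diagonal d *ᵥ c) := by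
    simp [← mulVec_mulVec, hc, Matrix.mul_assoc]
  rw [h1, dotProduct_mulVec, vecMul_eq_star, ← hc]
  simp only [dotProduct, mulVec_diagonal]
  exact Finset.sum_congr rfl fun i _ => by ring

lemma norm_conj (U : Matrix (Fin n) (Fin n) ℝ) (hU : U ∈ unitaryGroup (Fin n) ℝ)
    (h : Fin n → ℝ) : (star U *ᵥ h) ⬝ᵥ (star U *ᵥ h) = h ⬝ᵥ h := by
  calc (star U *ᵥ h) ⬝ᵥ (star U *ᵥ h) = (h ᵥ* U) ⬝ᵥ (star U *ᵥ h) := by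
        rw [vecMul_eq_star]
    _ = ((h ᵥ* U) ᵥ* star U) ⬝ᵥ h := by rw [dotProduct_mulVec]
    _ = (h ᵥ* (U * star U)) ⬝ᵥ h := by rw [vecMul_vecMul]
    _ = h ⬝ᵥ h := by rw [(mem_unitaryGroup_iff).mp hU, vecMul_one]

lemma inv_conj_diag (M U : Matrix (Fin n) (Fin n) ℝ) (d : Fin n → ℝ)
    (hU : U ∈ unitaryGroup (Fin n) ℝ) (hne : ∀ i, d i ≠ 0)
    (hspec : M = U * diagonal d * star U) :
    M⁻¹ = U * diagonal (fun i => (d i)⁻¹) * star U := by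
  subst hspec
  refine inv_eq_right_inv ?_
  calc U * diagonal d * star U * (U * diagonal (fun i => (d i)⁻¹) * star U)
      = U * (diagonal d * ((star U * U) * diagonal (fun i => (d i)⁻¹))) * star U := by
        simp only [Matrix.mul_assoc]
    _ = 1 := by
        rw [(mem_unitaryGroup_iff').mp hU, Matrix.one_mul, diagonal_mul_diagonal]
        have : (fun i => d i * (d i)⁻¹) = fun _ => (1:ℝ) := by
          funext i; exact mul_inv_cancel₀ (hne i)
        rw [this, diagonal_one, Matrix.mul_one, (mem_unitaryGroup_iff).mp hU]

lemma conj_diag_mul (U : Matrix (Fin n) (Fin n) ℝ) (d e : Fin n → ℝ)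
    (hU : U ∈ unitaryGroup (Fin n) ℝ) :
    (U * diagonal d * star U) * (U * diagonal e * star U)
      = U * diagonal (fun i => d i * e i) * star U := by
  calc (U * diagonal d * star U) * (U * diagonal e * star U)
      = U * (diagonal d * ((star U * U) * diagonal e)) * star U := by
        simp only [Matrix.mul_assoc]
    _ = _ := by
        rw [(mem_unitaryGroup_iff').mp hU, Matrix.one_mul, diagonal_mul_diagonal,
          Matrix.mul_assoc]

lemma quad_inv_bounds (M : Matrix (Fin n) (Fin n) ℝ) (hM : M.PosDef) (α β : ℝ)
    (hα : 0 < α) (hβ : 0 < β) (he : ∀ i, hM.1.eigenvalues i ∈ Set.Icc α β) (h : Fin n → ℝ) :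
    ((h ⬝ᵥ h)/β ≤ h ⬝ᵥ (M⁻¹ *ᵥ h) ∧ h ⬝ᵥ (M⁻¹ *ᵥ h) ≤ (h ⬝ᵥ h)/α) ∧
    ((h ⬝ᵥ h)/β^2 ≤ h ⬝ᵥ ((M⁻¹ * M⁻¹) *ᵥ h) ∧ h ⬝ᵥ ((M⁻¹ * M⁻¹) *ᵥ h) ≤ (h ⬝ᵥ h)/α^2) := by
  set U := (hM.1.eigenvectorUnitary : Matrix (Fin n) (Fin n) ℝ) with hUdef
  have hU : U ∈ unitaryGroup (Fin n) ℝ := hM.1.eigenvectorUnitary.2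
  set d := hM.1.eigenvalues with hddef
  have hspec : M = U * diagonal d * star U := by simpa using hM.1.spectral_theorem
  have hdpos : ∀ i, 0 < d i := fun i => hM.eigenvalues_pos i
  set c := star U *ᵥ h with hcdef
  have hcc : ∑ i, (c i)^2 = h ⬝ᵥ h := by
    rw [← norm_conj U hU h, ← hcdef, dotProduct]
    exact Finset.sum_congr rfl fun i _ => sq (c i)
  have hMinv : M⁻¹ = U * diagonal (fun i => (d i)⁻¹) * star U :=
    inv_conj_diag M U d hU (fun i => (hdpos i).ne') hspec
  have hq1 : h ⬝ᵥ (M⁻¹ *ᵥ h) = ∑ i, (d i)⁻¹ * (c i)^2 := by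
    rw [hMinv, quad_conj_diag]
  have hMinv2 : M⁻¹ * M⁻¹ = U * diagonal (fun i => (d i)⁻¹ * (d i)⁻¹) * star U := by
    rw [hMinv, conj_diag_mul U _ _ hU]
  have hq2 : h ⬝ᵥ ((M⁻¹ * M⁻¹) *ᵥ h) = ∑ i, ((d i)⁻¹ * (d i)⁻¹) * (c i)^2 := by
    rw [hMinv2, quad_conj_diag]
  have hsq : ∀ i, (0:ℝ) ≤ (c i)^2 := fun i => sq_nonneg _
  have hub : ∀ i, (d i)⁻¹ ≤ α⁻¹ := fun i => inv_anti₀ hα (he i).1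
  have hlb : ∀ i, β⁻¹ ≤ (d i)⁻¹ := fun i => inv_anti₀ (hdpos i) (he i).2
  refine ⟨⟨?_, ?_⟩, ?_, ?_⟩
  · rw [hq1, div_eq_inv_mul, ← hcc, Finset.mul_sum]
    exact Finset.sum_le_sum fun i _ => mul_le_mul_of_nonneg_right (hlb i) (hsq i)
  · rw [hq1, div_eq_inv_mul, ← hcc, Finset.mul_sum]
    exact Finset.sum_le_sum fun i _ => mul_le_mul_of_nonneg_right (hub i) (hsq i)
  · rw [hq2, div_eq_inv_mul, ← hcc, Finset.mul_sum]
    refine Finset.sum_le_sum fun i _ => mul_le_mul_of_nonneg_right ?_ (hsq i)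
    rw [sq, mul_inv]
    exact mul_le_mul (hlb i) (hlb i) (inv_nonneg.mpr hβ.le) (inv_nonneg.mpr (hdpos i).le)
  · rw [hq2, div_eq_inv_mul, ← hcc, Finset.mul_sum]
    refine Finset.sum_le_sum fun i _ => mul_le_mul_of_nonneg_right ?_ (hsq i)
    rw [sq, mul_inv]
    exact mul_le_mul (hub i) (hub i) (inv_nonneg.mpr (hdpos i).le) (inv_nonneg.mpr hα.le)

/-- Curvature ratio bound: for symmetric positive definite `F`, `G` with spectra in
`[λm, 2·λM]` and nonzero `h` with `‖h‖² ≤ σ²·λM`, the ratio of the marginal MSE gains is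
at most `(2·λM/λm)³`. -/
theorem curvature_ratio_bound {n : ℕ} (F G : Matrix (Fin n) (Fin n) ℝ)
    (hF : F.PosDef) (hG : G.PosDef) (lm lM : ℝ) (hlm : 0 < lm) (hlmM : lm ≤ lM)
    (heigF : ∀ i, hF.1.eigenvalues i ∈ Set.Icc lm (2 * lM))
    (heigG : ∀ i, hG.1.eigenvalues i ∈ Set.Icc lm (2 * lM))
    (h : Fin n → ℝ) (hh0 : h ≠ 0) (σ : ℝ) (hσ : 0 < σ) (hh : h ⬝ᵥ h ≤ σ ^ 2 * lM) :
    ((h ⬝ᵥ ((G⁻¹ * G⁻¹) *ᵥ h)) / (σ ^ 2 + h ⬝ᵥ (G⁻¹ *ᵥ h))) /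
        ((h ⬝ᵥ ((F⁻¹ * F⁻¹) *ᵥ h)) / (σ ^ 2 + h ⬝ᵥ (F⁻¹ *ᵥ h)))
      ≤ (2 * lM / lm) ^ 3 := by
  have hlM : 0 < lM := lt_of_lt_of_le hlm hlmM
  have hB : (0:ℝ) < 2 * lM := by linarith
  set a := h ⬝ᵥ h with hadef
  have ha : 0 < a := lt_of_le_of_ne (Finset.sum_nonneg fun i _ => mul_self_nonneg _)
    (Ne.symm ((dotProduct_self_eq_zero).not.mpr hh0))
  obtain ⟨⟨hG1l, hG1u⟩, hG2l, hG2u⟩ := quad_inv_bounds G hG lm (2*lM) hlm hB heigG h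
  obtain ⟨⟨hF1l, hF1u⟩, hF2l, hF2u⟩ := quad_inv_bounds F hF lm (2*lM) hlm hB heigF h
  set NG := h ⬝ᵥ ((G⁻¹ * G⁻¹) *ᵥ h)
  set NF := h ⬝ᵥ ((F⁻¹ * F⁻¹) *ᵥ h)
  set DG := σ ^ 2 + h ⬝ᵥ (G⁻¹ *ᵥ h) with hDG
  set DF := σ ^ 2 + h ⬝ᵥ (F⁻¹ *ᵥ h) with hDF
  have hDGpos : σ ^ 2 ≤ DG := by
    have : 0 ≤ h ⬝ᵥ (G⁻¹ *ᵥ h) := le_trans (by positivity) hG1l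
    rw [hDG]; linarith
  have hDFub : DF ≤ 2 * σ ^ 2 * lM / lm := by
    have h1 : h ⬝ᵥ (F⁻¹ *ᵥ h) ≤ a / lm := hF1u
    have h2 : a / lm ≤ σ ^ 2 * lM / lm := by gcongr
    have h3 : σ ^ 2 + σ ^ 2 * lM / lm ≤ 2 * σ ^ 2 * lM / lm := by
      have h4 : σ ^ 2 ≤ σ ^ 2 * lM / lm := by
        rw [le_div_iff₀ hlm]; nlinarith [sq_nonneg σ]
      have h5 : 2 * σ ^ 2 * lM / lm = σ ^ 2 * lM / lm + σ ^ 2 * lM / lm := by ring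
      linarith
    calc DF ≤ σ ^ 2 + σ ^ 2 * lM / lm := by rw [hDF]; linarith
      _ ≤ _ := h3
  have hDFpos : 0 < DF := by
    have : 0 ≤ h ⬝ᵥ (F⁻¹ *ᵥ h) := le_trans (by positivity) hF1l
    rw [hDF]; positivity
  have key1 : NG / DG ≤ (a / lm ^ 2) / σ ^ 2 :=
    div_le_div₀ (by positivity) hG2u (by positivity) hDGpos
  have hLBpos : (0:ℝ) < (a / (2 * lM) ^ 2) / (2 * σ ^ 2 * lM / lm) := by positivity
  have key2 : (a / (2 * lM) ^ 2) / (2 * σ ^ 2 * lM / lm) ≤ NF / DF :=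
    div_le_div₀ (le_trans (by positivity) hF2l) hF2l hDFpos hDFub
  calc (NG / DG) / (NF / DF)
      ≤ ((a / lm ^ 2) / σ ^ 2) / ((a / (2 * lM) ^ 2) / (2 * σ ^ 2 * lM / lm)) :=
        div_le_div₀ (by positivity) key1 hLBpos key2
    _ = (2 * lM / lm) ^ 3 := by
        field_simp
end
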